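/- Let X_1, X_2, ... be i.i.d. random vectors taking values in ℕ₀² defined on a probability space, with probability generating function v(t) = E[t₁^{X₁} t₂^{X₂}] defined for t = (t₁,t₂) in a set W ⊆ ℝ². Let v_n(t) = (1/n) ∑_{i=1}^n t₁^{X_{i1}} t₂^{X_{i2}} denote the empirical probability generating function. If 0 ≤ b_j ≤ c_j < ∞ for j = 1,2 are such that the rectangle Q = [b₁,c₁] × [b₂,c₂] ⊆ W, then sup_{t ∈ Q} |v_n(t) − v(t)| → 0 almost surely as n → ∞. -/

import Mathlib

open MeasureTheory ProbabilityTheory Filter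

/-! The maps `t ↦ t₁ ^ X₁ * t₂ ^ X₂` restricted to the compact rectangle `Q` are i.i.d. random
elements of the Banach space `C(Q, ℝ)`, and on `Q ⊆ [0, c₁] × [0, c₂]` their sup norm is dominated
by `c₁ ^ X₁ * c₂ ^ X₂`, which is integrable because `(c₁, c₂) ∈ W`. Etemadi's strong law in
`C(Q, ℝ)` is then exactly the claim, since the sup norm is the supremum over `Q` and evaluation
at a point commutes with the Bochner integral. -/

section UniformStrongLaw

variable {Ω K : Type*} [MeasurableSpace Ω] {P : Measure Ω}
  [TopologicalSpace K] [CompactSpace K] [MeasurableSpace C(K, ℝ)] [BorelSpace C(K, ℝ)]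

theorem ae_tendsto_iSup_abs_average_sub_integral (Y : ℕ → Ω → C(K, ℝ))
    (hint : Integrable (Y 0) P) (hindep : Pairwise (Function.onFun (IndepFun · · P) Y))
    (hident : ∀ i, IdentDistrib (Y i) (Y 0) P P) :
    ∀ᵐ ω ∂P, Tendsto
      (fun n : ℕ => ⨆ t : K,
        |(n : ℝ)⁻¹ * ∑ i ∈ Finset.range n, Y i ω t - ∫ ω', Y 0 ω' t ∂P|)
      atTop (nhds 0) := by
  filter_upwards [strong_law_ae Y hint hindep hident] with ω hω
  have hnorm := (hω.sub_const (∫ ω', Y 0 ω' ∂P)).norm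
  rw [sub_self, norm_zero] at hnorm
  refine hnorm.congr fun n => ?_
  simp only [ContinuousMap.norm_eq_iSup_norm, Real.norm_eq_abs, ContinuousMap.sub_apply,
    ContinuousMap.smul_apply, ContinuousMap.sum_apply, smul_eq_mul,
    ContinuousMap.integral_apply hint]

end UniformStrongLaw

def monomialOn (s : Set (ℝ × ℝ)) (p : ℕ × ℕ) : C(s, ℝ) :=
  ⟨fun t => (t : ℝ × ℝ).1 ^ p.1 * (t : ℝ × ℝ).2 ^ p.2, by fun_prop⟩

@[simp]
theorem monomialOn_apply (s : Set (ℝ × ℝ)) (p : ℕ × ℕ) (t : s) :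
    monomialOn s p t = (t : ℝ × ℝ).1 ^ p.1 * (t : ℝ × ℝ).2 ^ p.2 :=
  rfl

theorem norm_monomialOn_le {s : Set (ℝ × ℝ)} [CompactSpace s] {c₁ c₂ : ℝ} (hc₁ : 0 ≤ c₁)
    (hc₂ : 0 ≤ c₂) (hs : ∀ t ∈ s, |t.1| ≤ c₁ ∧ |t.2| ≤ c₂) (p : ℕ × ℕ) :
    ‖monomialOn s p‖ ≤ c₁ ^ p.1 * c₂ ^ p.2 := by
  refine (ContinuousMap.norm_le _ (by positivity)).2 fun t => ?_
  obtain ⟨ht₁, ht₂⟩ := hs t t.2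
  rw [monomialOn_apply, Real.norm_eq_abs, abs_mul, abs_pow, abs_pow]
  gcongr

/-- Let `X 1, X 2, ...` be i.i.d. random vectors with values in `ℕ₀²`,
with probability generating function `v t = E[t₁ ^ X₁ * t₂ ^ X₂]` defined (finite) for
`t ∈ W ⊆ ℝ²`.  If `0 ≤ bⱼ ≤ cⱼ < ∞` and the rectangle `Q = [b₁,c₁] × [b₂,c₂] ⊆ W`,
then `sup_{t ∈ Q} |vₙ t − v t| → 0` almost surely, where `vₙ` is the empirical pgf. -/
theorem epgf_unif_convergence
    {Ω : Type*} [MeasurableSpace Ω] (P : Measure Ω) [IsProbabilityMeasure P]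
    (X : ℕ → Ω → ℕ × ℕ) (hmeas : ∀ i, Measurable (X i))
    (hindep : iIndepFun X P)
    (hident : ∀ i, IdentDistrib (X i) (X 0) P P)
    (W : Set (ℝ × ℝ))
    (hW_int : ∀ t ∈ W, Integrable (fun ω => t.1 ^ (X 0 ω).1 * t.2 ^ (X 0 ω).2) P)
    (v : ℝ × ℝ → ℝ)
    (hv : ∀ t ∈ W, v t = ∫ ω, t.1 ^ (X 0 ω).1 * t.2 ^ (X 0 ω).2 ∂P)
    (b₁ c₁ b₂ c₂ : ℝ) (hb₁ : 0 ≤ b₁) (hbc₁ : b₁ ≤ c₁) (hb₂ : 0 ≤ b₂) (hbc₂ : b₂ ≤ c₂)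
    (hQW : Set.Icc b₁ c₁ ×ˢ Set.Icc b₂ c₂ ⊆ W) :
    ∀ᵐ ω ∂P, Tendsto
      (fun n : ℕ => ⨆ t : (Set.Icc b₁ c₁ ×ˢ Set.Icc b₂ c₂ : Set (ℝ × ℝ)),
        |(n : ℝ)⁻¹ * ∑ i ∈ Finset.range n,
            (t : ℝ × ℝ).1 ^ (X i ω).1 * (t : ℝ × ℝ).2 ^ (X i ω).2 - v t|)
      atTop (nhds 0) := by
  set Q : Set (ℝ × ℝ) := Set.Icc b₁ c₁ ×ˢ Set.Icc b₂ c₂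
  have : CompactSpace Q := isCompact_iff_compactSpace.mp (isCompact_Icc.prod isCompact_Icc)
  let : MeasurableSpace C(Q, ℝ) := borel C(Q, ℝ)
  have : BorelSpace C(Q, ℝ) := ⟨rfl⟩
  have hφ : Continuous (monomialOn Q) := continuous_of_discreteTopology
  have hQ_bound : ∀ t ∈ Q, |t.1| ≤ c₁ ∧ |t.2| ≤ c₂ := fun t ⟨ht₁, ht₂⟩ =>
    ⟨abs_le.2 ⟨by linarith [ht₁.1], ht₁.2⟩, abs_le.2 ⟨by linarith [ht₂.1], ht₂.2⟩⟩
  have hint : Integrable (fun ω => monomialOn Q (X 0 ω)) P :=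
    (hW_int (c₁, c₂) (hQW ⟨⟨hbc₁, le_rfl⟩, hbc₂, le_rfl⟩)).mono'
      (hφ.comp_stronglyMeasurable (hmeas 0).stronglyMeasurable).aestronglyMeasurable
      (ae_of_all _ fun ω =>
        norm_monomialOn_le (hb₁.trans hbc₁) (hb₂.trans hbc₂) hQ_bound (X 0 ω))
  filter_upwards [ae_tendsto_iSup_abs_average_sub_integral (fun i ω => monomialOn Q (X i ω))
    hint (fun i j hij => (hindep.indepFun hij).comp hφ.measurable hφ.measurable)
    (fun i => (hident i).comp hφ.measurable)] with ω hω
  refine hω.congr fun n => iSup_congr fun t => ?_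
  rw [hv t (hQW t.2)]
  rfl
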